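/- Let a, b > 2, 0 < τ₁ < a - 2, 0 < τ₂ < b - 2, and set η̄ = a+b, τ̄ = τ₁+τ₂. Then log(Γ(a-τ₁)Γ(b-τ₂)/(Γ(a+τ₁)Γ(b+τ₂))) + log(Γ(η̄+τ̄)/Γ(η̄-τ̄)) ≤ 2τ̄·log(η̄+1). -/

import Mathlib

/-!
The first logarithm is nonpositive because `Γ` is increasing on `[2, ∞)`. For the second, write
`e = a + b`, `t = τ₁ + τ₂`. When `t ≤ 1`, convexity of `log ∘ Γ` compares the slope over
`[e - t, e + t]` with the slope `log (e + t)` over `[e + t, e + t + 1]`. Larger `t` is reduced to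
`t - 1` by the functional equation, which peels off `log ((e + t - 1) (e - t)) ≤ 2 log (e + 1)`.
-/

open Set

namespace Real

lemma log_Gamma_add_one {x : ℝ} (hx : 0 < x) :
    log (Gamma (x + 1)) = log x + log (Gamma x) := by
  rw [Gamma_add_one hx.ne', log_mul hx.ne' (Gamma_pos_of_pos hx).ne']

lemma log_Gamma_sub_log_Gamma_le {x y : ℝ} (hx : 0 < x) (hxy : x ≤ y) :
    log (Gamma y) - log (Gamma x) ≤ (y - x) * log y := by
  rcases hxy.eq_or_lt with rfl | hxy
  · simp
  have hy : 0 < y := hx.trans hxy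
  have hslope := convexOn_log_Gamma.slope_mono_adjacent (x := x) (y := y) (z := y + 1)
    hx (mem_Ioi.mpr (by linarith)) hxy (by linarith)
  simp only [Function.comp_apply, log_Gamma_add_one hy, add_sub_cancel_left, div_one,
    add_sub_cancel_right] at hslope
  rwa [div_le_iff₀ (sub_pos.mpr hxy), mul_comm] at hslope

lemma log_Gamma_add_sub_log_Gamma_sub_le_of_le_one {e t : ℝ} (ht : 0 ≤ t) (hte : t < e)
    (ht1 : t ≤ 1) :
    log (Gamma (e + t)) - log (Gamma (e - t)) ≤ 2 * t * log (e + 1) :=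
  calc log (Gamma (e + t)) - log (Gamma (e - t))
      ≤ (e + t - (e - t)) * log (e + t) :=
        log_Gamma_sub_log_Gamma_le (by linarith) (by linarith)
    _ = 2 * t * log (e + t) := by ring
    _ ≤ 2 * t * log (e + 1) := by gcongr; linarith

lemma log_Gamma_add_sub_log_Gamma_sub_eq {e t : ℝ} (ht : 1 < t) (hte : t < e) :
    log (Gamma (e + t)) - log (Gamma (e - t)) =
      log ((e + t - 1) * (e - t)) +
        (log (Gamma (e + (t - 1))) - log (Gamma (e - (t - 1)))) := by
  have hplus : e + t = e + (t - 1) + 1 := by ring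
  have hminus : e - (t - 1) = e - t + 1 := by ring
  rw [hplus, hminus, log_Gamma_add_one (by linarith), log_Gamma_add_one (by linarith),
    log_mul (by linarith) (by linarith)]
  ring_nf

lemma log_Gamma_add_sub_log_Gamma_sub_le {e t : ℝ} (ht : 0 ≤ t) (hte : t < e) :
    log (Gamma (e + t)) - log (Gamma (e - t)) ≤ 2 * t * log (e + 1) := by
  obtain ⟨n, htn⟩ := exists_nat_ge t
  induction n generalizing t with
  | zero =>
    exact log_Gamma_add_sub_log_Gamma_sub_le_of_le_one ht hte (by push_cast at htn; linarith)
  | succ n ih =>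
    rcases le_or_gt t 1 with ht1 | ht1
    · exact log_Gamma_add_sub_log_Gamma_sub_le_of_le_one ht hte ht1
    have hrec := ih (t := t - 1) (by linarith) (by linarith) (by push_cast at htn; linarith)
    -- AM-GM: (e + t - 1)(e - t) ≤ (e - 1/2)² ≤ (e + 1)²
    have hpeel : log ((e + t - 1) * (e - t)) ≤ 2 * log (e + 1) := by
      rw [← log_rpow (by linarith), rpow_two]
      exact log_le_log (by nlinarith) (by nlinarith [sq_nonneg (2 * t - 1 - e)])
    rw [log_Gamma_add_sub_log_Gamma_sub_eq ht1 hte]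
    linarith

lemma log_Gamma_ratio_nonpos {x y : ℝ} (hx : 2 ≤ x) (hxy : x ≤ y) :
    log (Gamma x / Gamma y) ≤ 0 := by
  have hGx := Gamma_pos_of_pos (by linarith : 0 < x)
  refine log_nonpos (div_nonneg hGx.le (Gamma_pos_of_pos (by linarith)).le) ?_
  rw [div_le_one (Gamma_pos_of_pos (by linarith))]
  exact Gamma_strictMonoOn_Ici.monotoneOn hx (mem_Ici.mpr (hx.trans hxy)) hxy

end Real

theorem gamma_ratio_bound_large_general (a b τ₁ τ₂ : ℝ)
    (hτ₁ : 0 < τ₁) (hτ₁a : τ₁ < a - 2) (hτ₂ : 0 < τ₂) (hτ₂b : τ₂ < b - 2) :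
    Real.log (Real.Gamma (a - τ₁) * Real.Gamma (b - τ₂) /
        (Real.Gamma (a + τ₁) * Real.Gamma (b + τ₂))) +
      Real.log (Real.Gamma (a + b + (τ₁ + τ₂)) / Real.Gamma (a + b - (τ₁ + τ₂))) ≤
    2 * (τ₁ + τ₂) * Real.log (a + b + 1) := by
  have hΓ : ∀ x, 0 < x → Real.Gamma x ≠ 0 := fun x hx => (Real.Gamma_pos_of_pos hx).ne'
  have h₁ := Real.log_Gamma_ratio_nonpos (x := a - τ₁) (y := a + τ₁) (by linarith) (by linarith)
  have h₂ := Real.log_Gamma_ratio_nonpos (x := b - τ₂) (y := b + τ₂) (by linarith) (by linarith)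
  have hsum := Real.log_Gamma_add_sub_log_Gamma_sub_le (e := a + b) (t := τ₁ + τ₂)
    (by linarith) (by linarith)
  rw [← Real.log_div (hΓ _ (by linarith)) (hΓ _ (by linarith))] at hsum
  rw [mul_div_mul_comm, Real.log_mul (div_ne_zero (hΓ _ (by linarith)) (hΓ _ (by linarith)))
    (div_ne_zero (hΓ _ (by linarith)) (hΓ _ (by linarith)))]
  linarith

theorem gamma_ratio_bound_large (a b τ₁ τ₂ : ℝ) (ha : 2 < a) (hb : 2 < b)
    (hτ₁ : 0 < τ₁) (hτ₁a : τ₁ < a - 2) (hτ₂ : 0 < τ₂) (hτ₂b : τ₂ < b - 2) :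
    Real.log (Real.Gamma (a - τ₁) * Real.Gamma (b - τ₂) /
        (Real.Gamma (a + τ₁) * Real.Gamma (b + τ₂))) +
      Real.log (Real.Gamma (a + b + (τ₁ + τ₂)) / Real.Gamma (a + b - (τ₁ + τ₂))) ≤
    2 * (τ₁ + τ₂) * Real.log (a + b + 1) :=
  gamma_ratio_bound_large_general a b τ₁ τ₂ hτ₁ hτ₁a hτ₂ hτ₂b
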